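/- Let R be a Noetherian local ring of Krull dimension d > 0 and M a finitely generated R-module of finite length. Then the class [M] is zero in the rationalized Grothendieck group G(R)⊗Q of finitely generated R-modules. -/

import Mathlib

/-!
Additivity along a composition series gives `[M] = ℓ(M) • [k]` for `M` of finite length, so it
suffices that `[k]` is torsion. As `dim R > 0` and primes satisfy the ascending chain condition,
some prime `p` is covered by the maximal ideal; then `S = R/p` is a domain of dimension one and,
for `x ∈ 𝔪 \ p`, the sequence `0 → S → S → S/xS → 0` given by multiplication by `x` shows that
`[S/xS] = 0`. Since `S/xS` is nonzero of finite length, `ℓ(S/xS) • [k] = 0` with `ℓ(S/xS) > 0`.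
-/

open CategoryTheory IsLocalRing

noncomputable section

/-- The `i`-th Tor module of two modules over a commutative ring `R`. -/
def TorMod (R : Type) [CommRing R] (i : ℕ)
    (M N : Type) [AddCommGroup M] [Module R M] [AddCommGroup N] [Module R N] :
    ModuleCat R :=
  ((Tor (ModuleCat.{0} R) i).obj (ModuleCat.of R M)).obj (ModuleCat.of R N)

/-- The length of a module, as the Krull dimension of its lattice of submodules. -/
def modLength (R : Type) [CommRing R]
    (M : Type) [AddCommGroup M] [Module R M] : WithBot ℕ∞ :=
  Order.krullDim (Submodule R M)

/-- The dimension of a module: the Krull dimension of its support. -/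
def moduleDim (R : Type) [CommRing R]
    (M : Type) [AddCommGroup M] [Module R M] : WithBot ℕ∞ :=
  Order.krullDim (Module.support R M)

/-- A Noetherian local ring is regular if its maximal ideal is generated by
`dim R` elements. -/
def IsRegularLocal (R : Type) [CommRing R] [IsLocalRing R] : Prop :=
  IsNoetherianRing R ∧ ∃ s : Finset R,
    Ideal.span (s : Set R) = maximalIdeal R ∧ (s.card : WithBot ℕ∞) = ringKrullDim R

/-- An admissible regular local ring: a power series ring over a field or over a
(complete) discrete valuation ring. -/
def IsAdmissibleRegular (T : Type) [CommRing T] : Prop :=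
  (∃ (k : Type) (_ : Field k) (n : ℕ), Nonempty (T ≃+* MvPowerSeries (Fin n) k)) ∨
  (∃ (V : Type) (_ : CommRing V) (_ : IsDomain V) (_ : IsDiscreteValuationRing V) (n : ℕ),
    Nonempty (T ≃+* MvPowerSeries (Fin n) V))

/-- `R` is a hypersurface: its completion is `T/(f)` for a regular local ring `T`
and a nonzerodivisor `f` in the maximal ideal of `T`.  When `adm` is `true` we
furthermore require `T` to be admissible. -/
def IsHypersurface (R : Type) [CommRing R] [IsLocalRing R] (adm : Bool := false) : Prop :=
  ∃ (T : Type) (_ : CommRing T) (_ : IsLocalRing T) (f : T),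
    IsRegularLocal T ∧ (adm → IsAdmissibleRegular T) ∧
    f ∈ maximalIdeal T ∧ f ∈ nonZeroDivisors T ∧
    Nonempty ((AdicCompletion (maximalIdeal R) R) ≃+* (T ⧸ Ideal.span {f}))

/-- `M` has finite projective dimension: it admits a projective resolution vanishing
in all sufficiently high degrees. -/
def FinitePD (R : Type) [CommRing R]
    (M : Type) [AddCommGroup M] [Module R M] : Prop :=
  ∃ (n : ℕ) (P : ProjectiveResolution (ModuleCat.of R M)),
    ∀ m : ℕ, n < m → Subsingleton (P.complex.X m)

/-- The singular locus of `R`. -/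
def singLocus (R : Type) [CommRing R] : Set (PrimeSpectrum R) :=
  { p | ¬ IsRegularLocal (Localization.AtPrime p.asIdeal) }

/-- The infinite projective dimension locus of a module `M`. -/
def IPD (R : Type) [CommRing R] (M : Type) [AddCommGroup M] [Module R M] :
    Set (PrimeSpectrum R) :=
  { p | ¬ FinitePD (Localization.AtPrime p.asIdeal)
      (LocalizedModule p.asIdeal.primeCompl M) }

/-- `R` has (at most) an isolated singularity: every localization at a
nonmaximal prime is regular. -/
def IsolatedSingularity (R : Type) [CommRing R] [IsLocalRing R] : Prop :=
  ∀ p : PrimeSpectrum R, p.asIdeal ≠ maximalIdeal R →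
    IsRegularLocal (Localization.AtPrime p.asIdeal)

/-- The pair `(M, N)` is Tor-rigid. -/
def TorRigid (R : Type) [CommRing R]
    (M N : Type) [AddCommGroup M] [Module R M] [AddCommGroup N] [Module R N] : Prop :=
  ∀ i : ℕ, Subsingleton (TorMod R i M N) →
    ∀ j : ℕ, i ≤ j → Subsingleton (TorMod R j M N)

/-- Hochster's theta invariant of the pair `(M, N)` vanishes: for every index `e`
beyond the periodicity threshold, the lengths of `Tor_{2e+2}` and `Tor_{2e+1}` agree. -/
def ThetaZero (R : Type) [CommRing R]
    (M N : Type) [AddCommGroup M] [Module R M] [AddCommGroup N] [Module R N] : Prop :=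
  ∀ e : ℕ, ringKrullDim R + 2 ≤ ((2 * e : ℕ) : WithBot ℕ∞) →
    modLength R (TorMod R (2 * e + 2) M N) = modLength R (TorMod R (2 * e + 1) M N)

/-- Hochster's theta invariant is defined for `(M,N)`: all sufficiently high Tor
modules have finite length. -/
def ThetaDefined (R : Type) [CommRing R]
    (M N : Type) [AddCommGroup M] [Module R M] [AddCommGroup N] [Module R N] : Prop :=
  ∃ k : ℕ, ∀ j : ℕ, k ≤ j → IsFiniteLength R (TorMod R j M N)

/-- `M` has constant rank `r`: free of rank `r` at every minimal prime. -/
def ConstantRank (R : Type) [CommRing R]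
    (M : Type) [AddCommGroup M] [Module R M] (r : ℕ) : Prop :=
  ∀ p : Ideal R, ∀ h : p ∈ minimalPrimes R,
    haveI : p.IsPrime := h.1.1
    Nonempty ((LocalizedModule p.primeCompl M) ≃ₗ[Localization p.primeCompl]
      (Fin r → Localization p.primeCompl))

/-- `depth M ≥ n`: there is an `M`-regular sequence of length `n` inside the
maximal ideal. -/
def depthGE (R : Type) [CommRing R] [IsLocalRing R]
    (M : Type) [AddCommGroup M] [Module R M] (n : ℕ) : Prop :=
  ∃ rs : List R, rs.length = n ∧ (∀ r ∈ rs, r ∈ maximalIdeal R) ∧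
    RingTheory.Sequence.IsRegular M rs

/-- `M` is a Cohen–Macaulay module: its depth equals its dimension. -/
def IsCohenMacaulayMod (R : Type) [CommRing R] [IsLocalRing R]
    (M : Type) [AddCommGroup M] [Module R M] : Prop :=
  ∃ n : ℕ, moduleDim R M = (n : WithBot ℕ∞) ∧ depthGE R M n

/-- Generating relations for the Grothendieck group of finitely generated modules:
one relation for each short exact sequence of finitely generated modules. -/
def GRelGens (R : Type) [CommRing R] : Set (FreeAbelianGroup (ModuleCat.{0} R)) :=
  { x | ∃ (A B C : ModuleCat.{0} R) (f : A →ₗ[R] B) (g : B →ₗ[R] C),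
      Module.Finite R A ∧ Module.Finite R B ∧ Module.Finite R C ∧
      Function.Injective f ∧ Function.Surjective g ∧ Function.Exact f g ∧
      x = FreeAbelianGroup.of B - (FreeAbelianGroup.of A + FreeAbelianGroup.of C) }

/-- The Grothendieck group `G(R)` of finitely generated `R`-modules. -/
def GGroup (R : Type) [CommRing R] :=
  FreeAbelianGroup (ModuleCat.{0} R) ⧸ AddSubgroup.closure (GRelGens R)

instance (R : Type) [CommRing R] : AddCommGroup (GGroup R) :=
  QuotientAddGroup.Quotient.addCommGroup _

/-- The class of a finitely generated module in `G(R)`. -/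
def gclass (R : Type) [CommRing R] (M : Type) [AddCommGroup M] [Module R M] :
    GGroup R :=
  QuotientAddGroup.mk (FreeAbelianGroup.of (ModuleCat.of R M))

end


section GrothendieckGroup

variable {R : Type} [CommRing R]

theorem gclass_eq_add_of_exact {A B C : Type} [AddCommGroup A] [Module R A] [AddCommGroup B]
    [Module R B] [AddCommGroup C] [Module R C] [Module.Finite R A] [Module.Finite R B]
    [Module.Finite R C] {f : A →ₗ[R] B} {g : B →ₗ[R] C} (hf : Function.Injective f)
    (hg : Function.Surjective g) (hfg : Function.Exact f g) :
    gclass R B = gclass R A + gclass R C := by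
  have hrel := (QuotientAddGroup.eq_zero_iff _).mpr <|
    AddSubgroup.subset_closure (k := GRelGens R)
      ⟨.of R A, .of R B, .of R C, f, g, ‹_›, ‹_›, ‹_›, hf, hg, hfg, rfl⟩
  rwa [QuotientAddGroup.mk_sub, QuotientAddGroup.mk_add, sub_eq_zero] at hrel

theorem gclass_eq_zero_of_subsingleton (A : Type) [AddCommGroup A] [Module R A] [Subsingleton A] :
    gclass R A = 0 :=
  left_eq_add.mp <| gclass_eq_add_of_exact (f := LinearMap.id) (g := (0 : A →ₗ[R] A))
    Function.injective_id (fun _ => ⟨0, Subsingleton.elim _ _⟩) (fun a => iff_of_true rfl ⟨a, rfl⟩)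

theorem gclass_congr {A B : Type} [AddCommGroup A] [Module R A] [AddCommGroup B] [Module R B]
    [Module.Finite R A] (e : A ≃ₗ[R] B) : gclass R A = gclass R B := by
  have : Module.Finite R B := .equiv e
  rw [gclass_eq_add_of_exact (f := e.toLinearMap) (g := (0 : B →ₗ[R] PUnit)) e.injective
    (fun _ => ⟨0, rfl⟩) (fun b => iff_of_true rfl (e.surjective b)),
    gclass_eq_zero_of_subsingleton PUnit, add_zero]

theorem gclass_quotient_span_singleton_eq_zero {S : Type} [CommRing S] [Algebra R S]
    [Module.Finite R S] {y : S} (hy : y ∈ nonZeroDivisors S) :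
    gclass R (S ⧸ Ideal.span {y}) = 0 :=
  left_eq_add.mp <| gclass_eq_add_of_exact (f := LinearMap.mulLeft R y)
    (g := (Ideal.Quotient.mkₐ R (Ideal.span {y})).toLinearMap)
    (isRegular_iff_mem_nonZeroDivisors.mpr hy).left Ideal.Quotient.mk_surjective
    (fun z => by simp [Ideal.Quotient.eq_zero_iff_mem, Ideal.mem_span_singleton', mul_comm _ y])

end GrothendieckGroup

theorem IsFiniteLength.of_surjective_algebraMap {R S M : Type*} [CommRing R] [CommRing S]
    [Algebra R S] [AddCommGroup M] [Module R M] [Module S M] [IsScalarTower R S M]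
    (H : Function.Surjective (algebraMap R S)) (h : IsFiniteLength S M) : IsFiniteLength R M := by
  rw [← Module.length_ne_top_iff, Module.length_eq_of_surjective H]
  exact Module.length_ne_top_iff.mpr h

namespace IsLocalRing

theorem gclass_eq_length_smul_residue {R : Type} [CommRing R] [IsLocalRing R] {M : Type}
    [AddCommGroup M] [Module R M] (hM : IsFiniteLength R M) :
    gclass R M = (Module.length R M).toNat • gclass R (R ⧸ maximalIdeal R) := by
  induction hM with
  | @of_subsingleton M =>
    rw [gclass_eq_zero_of_subsingleton, Module.length_eq_zero, ENat.toNat_zero, zero_smul]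
  | @of_simple_quotient M _ _ N _ hN ih =>
    have : IsNoetherian R M :=
      (isFiniteLength_iff_isNoetherian_isArtinian.mp (.of_simple_quotient hN)).1
    obtain ⟨I, hI, ⟨e⟩⟩ := isSimpleModule_iff_quot_maximal.mp ‹IsSimpleModule R (M ⧸ N)›
    obtain rfl := eq_maximalIdeal hI
    have hexact : Function.Exact N.subtype N.mkQ := LinearMap.exact_subtype_mkQ N
    rw [gclass_eq_add_of_exact N.injective_subtype N.mkQ_surjective hexact, ih, gclass_congr e,
      Module.length_eq_add_of_exact _ _ N.injective_subtype N.mkQ_surjective hexact,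
      Module.length_eq_one R (M ⧸ N), ENat.toNat_add (Module.length_ne_top_iff.mpr hN)
      ENat.one_ne_top, ENat.toNat_one, succ_nsmul]

theorem exists_covBy_top_of_ringKrullDim_pos (R : Type*) [CommRing R] [IsLocalRing R]
    [IsNoetherianRing R] (h : 0 < ringKrullDim R) : ∃ p : PrimeSpectrum R, p ⋖ ⊤ := by
  have : WellFoundedGT (PrimeSpectrum R) :=
    (PrimeSpectrum.equivSubtype R).toOrderEmbedding.wellFoundedGT
  have : Nontrivial (PrimeSpectrum R) := Order.krullDim_pos_iff_of_orderTop.mp h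
  obtain ⟨q, hq⟩ := exists_ne (⊤ : PrimeSpectrum R)
  obtain ⟨p, -, hp⟩ := exists_le_covBy_of_lt hq.lt_top
  exact ⟨p, hp⟩

theorem krullDimLE_one_quotient_of_covBy_top {R : Type*} [CommRing R] [IsLocalRing R]
    {p : PrimeSpectrum R} (hp : p ⋖ ⊤) : Ring.KrullDimLE 1 (R ⧸ p.asIdeal) := by
  refine .mk₁' fun Q hQ _ => ?_
  have hsurj := Ideal.Quotient.mk_surjective (I := p.asIdeal)
  let q : PrimeSpectrum R := ⟨Q.comap (Ideal.Quotient.mk p.asIdeal), Ideal.comap_isPrime _ Q⟩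
  have hpq : p ≤ q := fun a ha => by simp [q, Ideal.Quotient.eq_zero_iff_mem.mpr ha]
  rw [← Ideal.map_comap_of_surjective _ hsurj Q]
  obtain hqp | hq := hp.eq_or_eq hpq le_top
  · refine absurd ?_ hQ
    rw [← Ideal.map_comap_of_surjective _ hsurj Q]
    change Ideal.map _ q.asIdeal = ⊥
    rw [hqp, Ideal.map_quotient_self]
  · change (Ideal.map _ q.asIdeal).IsMaximal
    rw [hq, PrimeSpectrum.asIdeal_top]
    exact (maximalIdeal.isMaximal R).map_of_surjective_of_ker_le hsurj
      (by simpa using le_maximalIdeal p.isPrime.ne_top)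

theorem exists_nsmul_gclass_residue_eq_zero (R : Type) [CommRing R] [IsLocalRing R]
    [IsNoetherianRing R] (h : 0 < ringKrullDim R) :
    ∃ n : ℕ, 0 < n ∧ n • gclass R (R ⧸ maximalIdeal R) = 0 := by
  obtain ⟨p, hp⟩ := exists_covBy_top_of_ringKrullDim_pos R h
  have := krullDimLE_one_quotient_of_covBy_top hp
  obtain ⟨x, hxm, hxp⟩ :=
    SetLike.exists_of_lt ((PrimeSpectrum.asIdeal_lt_asIdeal _ _).mpr hp.lt)
  set S := R ⧸ p.asIdeal
  let y : S := Ideal.Quotient.mk p.asIdeal x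
  have hy : y ∈ nonZeroDivisors S :=
    mem_nonZeroDivisors_of_ne_zero (by rwa [Ne, Ideal.Quotient.eq_zero_iff_mem])
  have hy_nonunit : ¬IsUnit y := fun hu => (mem_maximalIdeal x).mp hxm <|
    (isLocalHom_of_le_jacobson_bot p.asIdeal
      (by simpa [jacobson_eq_maximalIdeal] using le_maximalIdeal p.isPrime.ne_top)).map_nonunit x hu
  have : Nontrivial (S ⧸ Ideal.span {y}) :=
    Ideal.Quotient.nontrivial_iff.mpr (by rwa [Ne, Ideal.span_singleton_eq_top])
  have hfin : IsFiniteLength R (S ⧸ Ideal.span {y}) :=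
    .of_surjective_algebraMap (S := S) Ideal.Quotient.mk_surjective
      (isFiniteLength_quotient_span_singleton S hy)
  refine ⟨(Module.length R (S ⧸ Ideal.span {y})).toNat,
    ENat.toNat_pos Module.length_pos.ne' (Module.length_ne_top_iff.mpr hfin), ?_⟩
  rw [← gclass_eq_length_smul_residue hfin, gclass_quotient_span_singleton_eq_zero hy]

end IsLocalRing

theorem stmt0_general (R : Type) [CommRing R] [IsLocalRing R] [IsNoetherianRing R]
    (hdim : 0 < ringKrullDim R)
    (M : Type) [AddCommGroup M] [Module R M]
    (hM : IsFiniteLength R M) :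
    ∃ n : ℕ, 0 < n ∧ n • gclass R M = 0 := by
  obtain ⟨n, hn, hres⟩ := exists_nsmul_gclass_residue_eq_zero R hdim
  exact ⟨n, hn, by rw [gclass_eq_length_smul_residue hM, smul_comm, hres, smul_zero]⟩

theorem stmt0 (R : Type) [CommRing R] [IsLocalRing R] [IsNoetherianRing R]
    (hdim : 0 < ringKrullDim R)
    (M : Type) [AddCommGroup M] [Module R M] [Module.Finite R M]
    (hM : IsFiniteLength R M) :
    ∃ n : ℕ, 0 < n ∧ n • gclass R M = 0 :=
  stmt0_general R hdim M hM
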